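/- The semilinear form ⟨·,·⟩ on R is τ-invariant: for all u, v ∈ R and every simple root α ∈ Π, ⟨E_α u, v⟩ = ⟨u, q F_α K_α⁻¹ v⟩, ⟨F_α u, v⟩ = ⟨u, q E_α K_α v⟩, and ⟨K_α u, v⟩ = ⟨u, K_α⁻¹ v⟩. -/

import Mathlib

/-!
The adjoint representation of a simply-laced quantum group, realized concretely on the
`ℚ(q)`-vector space with basis `{x_μ : μ ∈ Φ} ∪ {h_α : α ∈ Π}`.
-/

noncomputable section

open Polynomial

/-- The field `ℚ(q)` of rational functions over `ℚ`. -/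
abbrev Qq : Type := RatFunc ℚ

/-- The indeterminate `q ∈ ℚ(q)`. -/
def qv : Qq := RatFunc.X

/-- A datum abstracting a simply-laced root system `Φ` with base `Π`, normalized so that
`(α, α) = 2` for roots: a symmetric bilinear form `B` together with the standard
combinatorial facts about pairings of roots and simple roots that hold in any finite
reduced irreducible crystallographic simply-laced root system. -/
structure SimplyLacedDatum (E : Type) [AddCommGroup E] [Module ℚ E] where
  /-- the inner product `(·,·)` -/
  B : E →ₗ[ℚ] E →ₗ[ℚ] ℚ
  symm : ∀ x y : E, B x y = B y x
  /-- the set of roots `Φ` -/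
  Phi : Set E
  /-- the base `Π` of simple roots -/
  Base : Set E
  base_sub : Base ⊆ Phi
  phi_finite : Phi.Finite
  zero_not_mem : (0 : E) ∉ Phi
  crystallographic : ∀ μ ∈ Phi, ∀ ν ∈ Phi, ∃ n : ℤ, B μ ν = n
  norm_two : ∀ μ ∈ Phi, B μ μ = 2
  neg_mem : ∀ μ ∈ Phi, -μ ∈ Phi
  base_pair : ∀ α ∈ Base, ∀ β ∈ Base, α ≠ β → B α β = 0 ∨ B α β = -1
  pair_range : ∀ μ ∈ Phi, ∀ α ∈ Base,
      B μ α = -2 ∨ B μ α = -1 ∨ B μ α = 0 ∨ B μ α = 1 ∨ B μ α = 2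
  pair_two_iff : ∀ μ ∈ Phi, ∀ α ∈ Base, (B μ α = 2 ↔ μ = α)
  pair_neg_two_iff : ∀ μ ∈ Phi, ∀ α ∈ Base, (B μ α = -2 ↔ μ = -α)
  add_mem : ∀ μ ∈ Phi, ∀ α ∈ Base, B μ α = -1 → μ + α ∈ Phi
  sub_mem : ∀ μ ∈ Phi, ∀ α ∈ Base, B μ α = 1 → μ - α ∈ Phi

namespace SimplyLacedDatum

variable {E : Type} [AddCommGroup E] [Module ℚ E] (D : SimplyLacedDatum E)

/-- The index set for the canonical basis of the adjoint representation:
one index for each root `μ ∈ Φ` (the vector `x_μ`) and one for each simple root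
`α ∈ Π` (the vector `h_α`). -/
def Idx : Type := {μ : E // μ ∈ D.Phi} ⊕ {α : E // α ∈ D.Base}

/-- The adjoint representation `R`, as the free `ℚ(q)`-module on `Idx`. -/
def R : Type := D.Idx →₀ Qq

instance : AddCommGroup D.R := inferInstanceAs (AddCommGroup (D.Idx →₀ Qq))
instance : Module Qq D.R := inferInstanceAs (Module Qq (D.Idx →₀ Qq))

/-- The canonical basis vector `x_μ`, for a root `μ ∈ Φ`. -/
def xv (μ : E) (h : μ ∈ D.Phi) : D.R := Finsupp.single (Sum.inl ⟨μ, h⟩) 1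

/-- The canonical basis vector `h_α`, for a simple root `α ∈ Π`. -/
def hv (α : E) (h : α ∈ D.Base) : D.R := Finsupp.single (Sum.inr ⟨α, h⟩) 1

/-- The `ℚ(q)`-linear operator on `R` sending the basis vector indexed by `i` to `v i`. -/
def opOf (v : D.Idx → D.R) : D.R →ₗ[Qq] D.R :=
  Finsupp.lsum Qq fun i => LinearMap.toSpanSingleton Qq D.R (v i)

open Classical in
/-- The images of the basis vectors under `E_α`. -/
def Evec (α : E) (hα : α ∈ D.Base) : D.Idx → D.R := fun i =>
  match i with
  | Sum.inl μ =>
      if h : D.B μ.1 α = -1 then D.xv (μ.1 + α) (D.add_mem μ.1 μ.2 α hα h)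
      else if D.B μ.1 α = -2 then D.hv α hα
      else 0
  | Sum.inr β =>
      if β.1 = α then (qv + qv⁻¹) • D.xv α (D.base_sub hα)
      else if D.B β.1 α = -1 then D.xv α (D.base_sub hα)
      else 0

open Classical in
/-- The images of the basis vectors under `F_α`. -/
def Fvec (α : E) (hα : α ∈ D.Base) : D.Idx → D.R := fun i =>
  match i with
  | Sum.inl μ =>
      if h : D.B μ.1 α = 1 then D.xv (μ.1 - α) (D.sub_mem μ.1 μ.2 α hα h)
      else if D.B μ.1 α = 2 then D.hv α hα
      else 0
  | Sum.inr β =>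
      if β.1 = α then (qv + qv⁻¹) • D.xv (-α) (D.neg_mem α (D.base_sub hα))
      else if D.B β.1 α = -1 then D.xv (-α) (D.neg_mem α (D.base_sub hα))
      else 0

/-- The images of the basis vectors under `K_α`: `K_α x_μ = q^{(α,μ)} x_μ`,
`K_α h_β = h_β`. -/
def Kvec (α : E) (hα : α ∈ D.Base) : D.Idx → D.R := fun i =>
  match i with
  | Sum.inl μ => qv ^ (D.B α μ.1).num • D.xv μ.1 μ.2
  | Sum.inr β => D.hv β.1 β.2

/-- The images of the basis vectors under `K_α⁻¹`: `K_α⁻¹ x_μ = q^{−(α,μ)} x_μ`,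
`K_α⁻¹ h_β = h_β`. -/
def Kinvvec (α : E) (hα : α ∈ D.Base) : D.Idx → D.R := fun i =>
  match i with
  | Sum.inl μ => qv ^ (-(D.B α μ.1).num) • D.xv μ.1 μ.2
  | Sum.inr β => D.hv β.1 β.2

/-- The operator `E_α` on the adjoint representation. -/
def opE (α : E) (hα : α ∈ D.Base) : D.R →ₗ[Qq] D.R := D.opOf (D.Evec α hα)

/-- The operator `F_α` on the adjoint representation. -/
def opF (α : E) (hα : α ∈ D.Base) : D.R →ₗ[Qq] D.R := D.opOf (D.Fvec α hα)

/-- The operator `K_α` on the adjoint representation. -/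
def opK (α : E) (hα : α ∈ D.Base) : D.R →ₗ[Qq] D.R := D.opOf (D.Kvec α hα)

/-- The operator `K_α⁻¹` on the adjoint representation. -/
def opKinv (α : E) (hα : α ∈ D.Base) : D.R →ₗ[Qq] D.R := D.opOf (D.Kinvvec α hα)

end SimplyLacedDatum

end

noncomputable section

namespace SimplyLacedDatum

/-- `X` is transcendental over `ℚ` in `ℚ(q)`. -/
theorem ratfuncX_transcendental : Transcendental ℚ (RatFunc.X : Qq) := by
  have h1 : Transcendental ℚ (Polynomial.X : Polynomial ℚ) := Polynomial.transcendental_X ℚ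
  have h2 := (transcendental_algebraMap_iff (R := ℚ) (S := Polynomial ℚ) (A := Qq)
      (IsFractionRing.injective (Polynomial ℚ) Qq)).mpr h1
  simpa using h2

/-- `q⁻¹` is transcendental over `ℚ` in `ℚ(q)`. -/
theorem qv_inv_transcendental : Transcendental ℚ (qv⁻¹ : Qq) := fun h =>
  ratfuncX_transcendental (IsAlgebraic.inv_iff.mp h)

/-- The bar involution of `ℚ(q)`: the `ℚ`-algebra map determined by `q ↦ q⁻¹`. -/
def barHom : Qq →+* Qq :=
  IsFractionRing.lift (A := Polynomial ℚ)
    (g := (Polynomial.aeval (qv⁻¹ : Qq)).toRingHom)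
    (transcendental_iff_injective.mp qv_inv_transcendental)

variable {E : Type} [AddCommGroup E] [Module ℚ E] (D : SimplyLacedDatum E)

open Classical in
/-- The Gram matrix of the semilinear form on the canonical basis of `R`:
`⟨x_μ, x_ν⟩ = δ_{μν}`, `⟨x_μ, h_α⟩ = ⟨h_α, x_μ⟩ = 0`, `⟨h_α, h_α⟩ = 1 + q²`,
`⟨h_α, h_β⟩ = q` if `(α,β) = −1`, and `⟨h_α, h_β⟩ = 0` if `(α,β) = 0`. -/
def gram : D.Idx → D.Idx → Qq := fun i j =>
  match i, j with
  | Sum.inl μ, Sum.inl ν => if μ = ν then 1 else 0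
  | Sum.inl _, Sum.inr _ => 0
  | Sum.inr _, Sum.inl _ => 0
  | Sum.inr α, Sum.inr β =>
      if α = β then 1 + qv ^ 2 else if D.B α.1 β.1 = -1 then qv else 0

/-- The semilinear form `⟨·,·⟩` on `R`: `ℚ(q)`-antilinear in the first variable
(via the bar involution `q ↦ q⁻¹`) and `ℚ(q)`-linear in the second, given on the
canonical basis by the Gram matrix `gram`. -/
def form (u v : D.R) : Qq :=
  u.sum fun i c => v.sum fun j d => barHom c * d * D.gram i j

end SimplyLacedDatum

end

/-!
Both sides of each identity are sesquilinear in `(u, v)`, so it suffices to compare them on the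
basis `{x_μ} ∪ {h_β}`. For `E_α` this is a short computation, using that `μ, μ + α ∈ Φ` forces
`(μ, α) = -1` and that `⟨h_α, h_β⟩ = q c` where `E_α h_β = c x_α`. The identity for `F_α` is the
one for `E_α` conjugated by the Chevalley involution `ω : x_μ ↦ x_{-μ}, h_β ↦ h_β`, which is
self-adjoint, squares to the identity, and satisfies `ω E_α = F_α ω` and `ω K_α⁻¹ = K_α ω`.
-/

namespace Finsupp

variable {ι K : Type*} [CommSemiring K] (σ : K →+* K) (g : ι → ι → K)

noncomputable def gramForm : (ι →₀ K) →ₛₗ[σ] (ι →₀ K) →ₗ[K] K :=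
  LinearMap.mk₂'ₛₗ σ (RingHom.id K)
    (fun u v => u.sum fun i c => v.sum fun j d => σ c * d * g i j)
    (fun u u' v => by
      refine sum_add_index' (fun i => by simp) fun i c c' => ?_
      rw [← sum_add]
      exact sum_congr fun j _ => by rw [map_add]; ring)
    (fun c u v => by
      rw [sum_smul_index (fun i => by simp), smul_eq_mul, mul_sum]
      refine sum_congr fun i _ => ?_
      rw [mul_sum]
      exact sum_congr fun j _ => by rw [map_mul]; ring)
    (fun u v v' => by
      rw [← sum_add]
      exact sum_congr fun i _ => sum_add_index' (fun j => by simp) fun j d d' => by ring)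
    (fun c u v => by
      rw [RingHom.id_apply, smul_eq_mul, mul_sum]
      refine sum_congr fun i _ => ?_
      rw [sum_smul_index (fun j => by simp), mul_sum]
      exact sum_congr fun j _ => by ring)

theorem gramForm_single_one (i j : ι) : gramForm σ g (single i 1) (single j 1) = g i j := by
  simp [gramForm]

theorem gramForm_map_eq_of_single {T S : (ι →₀ K) →ₗ[K] ι →₀ K}
    (h : ∀ i j, gramForm σ g (T (single i 1)) (single j 1) =
      gramForm σ g (single i 1) (S (single j 1)))
    (u v : ι →₀ K) : gramForm σ g (T u) v = gramForm σ g u (S v) :=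
  LinearMap.congr_fun₂ (LinearMap.ext_basis (B := (gramForm σ g).comp T)
    (B' := (gramForm σ g).compl₂ S) Finsupp.basisSingleOne Finsupp.basisSingleOne
    (by simpa using h)) u v

end Finsupp

namespace SimplyLacedDatum

theorem qv_ne_zero : qv ≠ 0 := RatFunc.X_ne_zero

theorem barHom_qv : barHom qv = qv⁻¹ := by
  have h : qv = algebraMap (Polynomial ℚ) Qq Polynomial.X := RatFunc.algebraMap_X.symm
  rw [h, barHom, IsFractionRing.lift_algebraMap, ← h]
  simp

theorem barHom_zpow_qv (n : ℤ) : barHom (qv ^ n) = qv ^ (-n) := by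
  rw [map_zpow₀, barHom_qv, inv_zpow, ← zpow_neg]

variable {E : Type} [AddCommGroup E] [Module ℚ E] (D : SimplyLacedDatum E)

theorem pair_eq_neg_one_of_add_mem {α μ : E} (hα : α ∈ D.Base) (hμ : μ ∈ D.Phi)
    (hμα : μ + α ∈ D.Phi) : D.B μ α = -1 := by
  have hsum : D.B (μ + α) α = D.B μ α + 2 := by
    rw [map_add, LinearMap.add_apply, D.norm_two α (D.base_sub hα)]
  have hle : D.B (μ + α) α ≤ 2 := by
    rcases D.pair_range _ hμα α hα with h | h | h | h | h <;> rw [h] <;> norm_num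
  rcases D.pair_range μ hμ α hα with h | h | h | h | h
  · rw [(D.pair_neg_two_iff μ hμ α hα).mp h, neg_add_cancel] at hμα
    exact absurd hμα D.zero_not_mem
  · exact h
  · have : μ + α = α := (D.pair_two_iff _ hμα α hα).mp (by rw [hsum, h, zero_add])
    rw [add_eq_right] at this
    exact absurd (this ▸ hμ) D.zero_not_mem
  all_goals linarith

theorem pair_eq_one_of_sub_mem {α μ : E} (hα : α ∈ D.Base) (hμ : μ ∈ D.Phi)
    (hμα : μ - α ∈ D.Phi) : D.B μ α = 1 := by
  have h := D.pair_eq_neg_one_of_add_mem hα hμα (by rwa [sub_add_cancel])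
  rw [map_sub, LinearMap.sub_apply, D.norm_two α (D.base_sub hα)] at h
  linarith

theorem xv_congr {μ ν : E} (h : μ = ν) (hμ : μ ∈ D.Phi) (hν : ν ∈ D.Phi) :
    D.xv μ hμ = D.xv ν hν := by
  subst h; rfl

theorem linearMap_ext {T S : D.R →ₗ[Qq] D.R} (hx : ∀ μ hμ, T (D.xv μ hμ) = S (D.xv μ hμ))
    (hh : ∀ β hβ, T (D.hv β hβ) = S (D.hv β hβ)) : T = S :=
  Finsupp.basisSingleOne.ext (by rintro (⟨μ, hμ⟩ | ⟨β, hβ⟩); exacts [hx μ hμ, hh β hβ])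

theorem opOf_single_one (w : D.Idx → D.R) (i : D.Idx) :
    D.opOf w (Finsupp.single i 1) = w i :=
  (Finsupp.lsum_single Qq (fun i => LinearMap.toSpanSingleton Qq D.R (w i)) i 1).trans
    (one_smul _ _)

theorem opOf_xv (w : D.Idx → D.R) {μ : E} (hμ : μ ∈ D.Phi) :
    D.opOf w (D.xv μ hμ) = w (.inl ⟨μ, hμ⟩) :=
  D.opOf_single_one w _

theorem opOf_hv (w : D.Idx → D.R) {β : E} (hβ : β ∈ D.Base) :
    D.opOf w (D.hv β hβ) = w (.inr ⟨β, hβ⟩) :=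
  D.opOf_single_one w _

-- `D.form` unfolds to `Finsupp.gramForm barHom D.gram`.
theorem form_smul_left (c : Qq) (u v : D.R) : D.form (c • u) v = barHom c * D.form u v :=
  (Finsupp.gramForm barHom D.gram).map_smulₛₗ₂ c u v

theorem form_smul_right (c : Qq) (u v : D.R) : D.form u (c • v) = c * D.form u v :=
  (Finsupp.gramForm barHom D.gram u).map_smul c v

@[simp]
theorem form_zero_left (v : D.R) : D.form 0 v = 0 :=
  (Finsupp.gramForm barHom D.gram).map_zero₂ v

@[simp]
theorem form_zero_right (u : D.R) : D.form u 0 = 0 :=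
  (Finsupp.gramForm barHom D.gram u).map_zero

theorem form_single_one (i j : D.Idx) :
    D.form (Finsupp.single i 1) (Finsupp.single j 1) = D.gram i j :=
  Finsupp.gramForm_single_one barHom D.gram i j

theorem form_map_eq_of_basis (T S : D.R →ₗ[Qq] D.R)
    (hxx : ∀ μ hμ ν hν, D.form (T (D.xv μ hμ)) (D.xv ν hν) = D.form (D.xv μ hμ) (S (D.xv ν hν)))
    (hxh : ∀ μ hμ β hβ, D.form (T (D.xv μ hμ)) (D.hv β hβ) = D.form (D.xv μ hμ) (S (D.hv β hβ)))
    (hhx : ∀ β hβ ν hν, D.form (T (D.hv β hβ)) (D.xv ν hν) = D.form (D.hv β hβ) (S (D.xv ν hν)))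
    (hhh : ∀ β hβ γ hγ, D.form (T (D.hv β hβ)) (D.hv γ hγ) = D.form (D.hv β hβ) (S (D.hv γ hγ)))
    (u v : D.R) : D.form (T u) v = D.form u (S v) :=
  Finsupp.gramForm_map_eq_of_single barHom D.gram (T := T) (S := S)
    (by rintro (⟨μ, hμ⟩ | ⟨β, hβ⟩) (⟨ν, hν⟩ | ⟨γ, hγ⟩)
        exacts [hxx μ hμ ν hν, hxh μ hμ γ hγ, hhx β hβ ν hν, hhh β hβ γ hγ]) u v

open Classical in
theorem form_xv_xv {μ ν : E} (hμ : μ ∈ D.Phi) (hν : ν ∈ D.Phi) :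
    D.form (D.xv μ hμ) (D.xv ν hν) = if μ = ν then 1 else 0 :=
  (D.form_single_one (.inl ⟨μ, hμ⟩) (.inl ⟨ν, hν⟩)).trans (by simp [gram])

@[simp]
theorem form_xv_hv {μ β : E} (hμ : μ ∈ D.Phi) (hβ : β ∈ D.Base) :
    D.form (D.xv μ hμ) (D.hv β hβ) = 0 :=
  D.form_single_one (.inl ⟨μ, hμ⟩) (.inr ⟨β, hβ⟩)

@[simp]
theorem form_hv_xv {μ β : E} (hμ : μ ∈ D.Phi) (hβ : β ∈ D.Base) :
    D.form (D.hv β hβ) (D.xv μ hμ) = 0 :=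
  D.form_single_one (.inr ⟨β, hβ⟩) (.inl ⟨μ, hμ⟩)

theorem form_hv_hv_comm {β γ : E} (hβ : β ∈ D.Base) (hγ : γ ∈ D.Base) :
    D.form (D.hv β hβ) (D.hv γ hγ) = D.form (D.hv γ hγ) (D.hv β hβ) := by
  refine (D.form_single_one _ _).trans (Eq.trans ?_ (D.form_single_one _ _).symm)
  by_cases h : β = γ
  · subst h; rfl
  · simp only [gram, Subtype.mk.injEq, h, Ne.symm h, D.symm β γ, ↓reduceIte]

open Classical in
noncomputable def hCoeff (α β : E) : Qq :=
  if β = α then qv + qv⁻¹ else if D.B β α = -1 then 1 else 0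

theorem barHom_hCoeff (α β : E) : barHom (D.hCoeff α β) = D.hCoeff α β := by
  unfold hCoeff
  split_ifs <;> simp [barHom_qv, add_comm]

theorem form_hv_self_hv {α β : E} (hα : α ∈ D.Base) (hβ : β ∈ D.Base) :
    D.form (D.hv α hα) (D.hv β hβ) = qv * D.hCoeff α β := by
  refine (D.form_single_one (.inr ⟨α, hα⟩) (.inr ⟨β, hβ⟩)).trans ?_
  by_cases h : β = α
  · subst h
    simp only [gram, hCoeff, ↓reduceIte]
    field_simp [qv_ne_zero]
    ring
  · simp only [gram, hCoeff, Subtype.mk.injEq, h, Ne.symm h, D.symm α β, ↓reduceIte]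
    split_ifs <;> simp

section Operators

variable {α μ : E} (hα : α ∈ D.Base) (hμ : μ ∈ D.Phi)

theorem opE_xv_of_pair_eq_neg_one (h : D.B μ α = -1) :
    D.opE α hα (D.xv μ hμ) = D.xv (μ + α) (D.add_mem μ hμ α hα h) := by
  rw [opE, opOf_xv]
  simp [Evec, h]

open Classical in
theorem opE_xv_of_pair_ne_neg_one (h : D.B μ α ≠ -1) :
    D.opE α hα (D.xv μ hμ) = if μ = -α then D.hv α hα else 0 := by
  rw [opE, opOf_xv]
  simp [Evec, h, D.pair_neg_two_iff μ hμ α hα]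

theorem opE_hv {β : E} (hβ : β ∈ D.Base) :
    D.opE α hα (D.hv β hβ) = D.hCoeff α β • D.xv α (D.base_sub hα) := by
  rw [opE, opOf_hv]
  simp only [Evec, hCoeff]
  split_ifs <;> simp

theorem opF_xv_of_pair_eq_one (h : D.B μ α = 1) :
    D.opF α hα (D.xv μ hμ) = D.xv (μ - α) (D.sub_mem μ hμ α hα h) := by
  rw [opF, opOf_xv]
  simp [Fvec, h]

open Classical in
theorem opF_xv_of_pair_ne_one (h : D.B μ α ≠ 1) :
    D.opF α hα (D.xv μ hμ) = if μ = α then D.hv α hα else 0 := by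
  rw [opF, opOf_xv]
  simp [Fvec, h, D.pair_two_iff μ hμ α hα]

theorem opF_hv {β : E} (hβ : β ∈ D.Base) :
    D.opF α hα (D.hv β hβ) = D.hCoeff α β • D.xv (-α) (D.neg_mem α (D.base_sub hα)) := by
  rw [opF, opOf_hv]
  simp only [Fvec, hCoeff]
  split_ifs <;> simp

theorem opK_xv : D.opK α hα (D.xv μ hμ) = qv ^ (D.B α μ).num • D.xv μ hμ :=
  D.opOf_xv _ hμ

theorem opK_hv {β : E} (hβ : β ∈ D.Base) : D.opK α hα (D.hv β hβ) = D.hv β hβ :=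
  D.opOf_hv _ hβ

theorem opKinv_xv : D.opKinv α hα (D.xv μ hμ) = qv ^ (-(D.B α μ).num) • D.xv μ hμ :=
  D.opOf_xv _ hμ

theorem opKinv_hv {β : E} (hβ : β ∈ D.Base) : D.opKinv α hα (D.hv β hβ) = D.hv β hβ :=
  D.opOf_hv _ hβ

end Operators

section MatrixCoefficients

variable {α μ ν : E} (hα : α ∈ D.Base) (hμ : μ ∈ D.Phi) (hν : ν ∈ D.Phi)

open Classical in
theorem form_opE_xv_xv :
    D.form (D.opE α hα (D.xv μ hμ)) (D.xv ν hν) = if μ + α = ν then 1 else 0 := by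
  by_cases h : D.B μ α = -1
  · rw [D.opE_xv_of_pair_eq_neg_one hα hμ h, form_xv_xv]
  · have hne : μ + α ≠ ν := fun he => h (D.pair_eq_neg_one_of_add_mem hα hμ (he ▸ hν))
    rw [D.opE_xv_of_pair_ne_neg_one hα hμ h, if_neg hne]
    split_ifs <;> simp

open Classical in
theorem form_xv_opF_xv :
    D.form (D.xv μ hμ) (D.opF α hα (D.xv ν hν)) = if μ + α = ν then 1 else 0 := by
  by_cases h : D.B ν α = 1
  · rw [D.opF_xv_of_pair_eq_one hα hν h, form_xv_xv]
    simp only [eq_sub_iff_add_eq]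
  · have hne : μ + α ≠ ν := fun he =>
      h (D.pair_eq_one_of_sub_mem hα hν (by rwa [← he, add_sub_cancel_right]))
    rw [D.opF_xv_of_pair_ne_one hα hν h, if_neg hne]
    split_ifs <;> simp

open Classical in
theorem form_opE_xv_hv {γ : E} (hγ : γ ∈ D.Base) :
    D.form (D.opE α hα (D.xv μ hμ)) (D.hv γ hγ) = if μ = -α then qv * D.hCoeff α γ else 0 := by
  by_cases h : D.B μ α = -1
  · have hne : μ ≠ -α := by
      rintro rfl
      rw [map_neg, LinearMap.neg_apply, D.norm_two α (D.base_sub hα)] at h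
      norm_num at h
    rw [D.opE_xv_of_pair_eq_neg_one hα hμ h, if_neg hne, form_xv_hv]
  · rw [D.opE_xv_of_pair_ne_neg_one hα hμ h]
    split_ifs <;> simp [D.form_hv_self_hv hα hγ]

open Classical in
theorem form_hv_opF_xv {β : E} (hβ : β ∈ D.Base) :
    D.form (D.hv β hβ) (D.opF α hα (D.xv ν hν)) = if ν = α then qv * D.hCoeff α β else 0 := by
  by_cases h : D.B ν α = 1
  · have hne : ν ≠ α := by
      rintro rfl
      rw [D.norm_two ν (D.base_sub hα)] at h
      norm_num at h
    rw [D.opF_xv_of_pair_eq_one hα hν h, if_neg hne, form_hv_xv]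
  · rw [D.opF_xv_of_pair_ne_one hα hν h]
    split_ifs <;> simp [D.form_hv_hv_comm hβ hα, D.form_hv_self_hv hα hβ]

end MatrixCoefficients

noncomputable def chevalley : D.R →ₗ[Qq] D.R :=
  D.opOf fun
    | .inl μ => D.xv (-μ.1) (D.neg_mem μ.1 μ.2)
    | .inr β => D.hv β.1 β.2

theorem chevalley_xv {μ : E} (hμ : μ ∈ D.Phi) :
    D.chevalley (D.xv μ hμ) = D.xv (-μ) (D.neg_mem μ hμ) :=
  D.opOf_xv _ hμ

theorem chevalley_hv {β : E} (hβ : β ∈ D.Base) : D.chevalley (D.hv β hβ) = D.hv β hβ :=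
  D.opOf_hv _ hβ

theorem chevalley_chevalley (u : D.R) : D.chevalley (D.chevalley u) = u := by
  suffices h : D.chevalley ∘ₗ D.chevalley = LinearMap.id from LinearMap.congr_fun h u
  refine D.linearMap_ext (fun μ hμ => ?_) (fun β hβ => ?_)
  · simp only [LinearMap.comp_apply, chevalley_xv, LinearMap.id_apply]
    exact D.xv_congr (neg_neg μ) _ _
  · simp only [LinearMap.comp_apply, chevalley_hv, LinearMap.id_apply]

theorem form_chevalley_left (u v : D.R) :
    D.form (D.chevalley u) v = D.form u (D.chevalley v) := by
  refine D.form_map_eq_of_basis _ _ (fun μ hμ ν hν => ?_) ?_ ?_ ?_ u v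
  · simp only [chevalley_xv, form_xv_xv]
    rw [neg_eq_iff_eq_neg]
  all_goals intros; simp only [chevalley_xv, chevalley_hv, form_xv_hv, form_hv_xv]

variable {α : E} (hα : α ∈ D.Base)

theorem form_opE_left (u v : D.R) :
    D.form (D.opE α hα u) v = D.form u (qv • D.opF α hα (D.opKinv α hα v)) := by
  refine D.form_map_eq_of_basis _ (qv • (D.opF α hα ∘ₗ D.opKinv α hα)) ?_ ?_ ?_ ?_ u v
  · intro μ hμ ν hν
    simp only [LinearMap.smul_apply, LinearMap.comp_apply, opKinv_xv, map_smul, form_smul_right,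
      form_opE_xv_xv, form_xv_opF_xv]
    split_ifs with he
    · have h1 : D.B α ν = 1 :=
        (D.symm α ν).trans (D.pair_eq_one_of_sub_mem hα hν (by rwa [← he, add_sub_cancel_right]))
      rw [h1, Rat.num_one, zpow_neg_one, mul_one, mul_inv_cancel₀ qv_ne_zero]
    · simp
  · intro μ hμ γ hγ
    simp only [LinearMap.smul_apply, LinearMap.comp_apply, opKinv_hv, opF_hv, form_smul_right,
      form_opE_xv_hv, form_xv_xv]
    split_ifs <;> ring
  · intro β hβ ν hν
    simp only [LinearMap.smul_apply, LinearMap.comp_apply, opKinv_xv, opE_hv, map_smul,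
      form_smul_left, form_smul_right, barHom_hCoeff, form_hv_opF_xv, form_xv_xv]
    split_ifs with h1 h2 h2
    · subst h2
      simp only [D.norm_two ν (D.base_sub hα), Rat.num_ofNat, zpow_neg, zpow_ofNat]
      field_simp [qv_ne_zero]
    · exact absurd h1.symm h2
    · exact absurd h2.symm h1
    · simp
  · intro β hβ γ hγ
    simp [opE_hv, opF_hv, opKinv_hv, form_smul_left, form_smul_right]

theorem form_opK_left (u v : D.R) :
    D.form (D.opK α hα u) v = D.form u (D.opKinv α hα v) := by
  refine D.form_map_eq_of_basis _ _ (fun μ hμ ν hν => ?_) ?_ ?_ ?_ u v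
  · rw [opK_xv, opKinv_xv, form_smul_left, form_smul_right, barHom_zpow_qv, form_xv_xv]
    split_ifs with h
    · subst h; rfl
    · simp
  all_goals intros; simp only [opK_xv, opK_hv, opKinv_xv, opKinv_hv, form_smul_left,
    form_smul_right, form_xv_hv, form_hv_xv, mul_zero]

theorem chevalley_opE (u : D.R) : D.chevalley (D.opE α hα u) = D.opF α hα (D.chevalley u) := by
  suffices h : D.chevalley ∘ₗ D.opE α hα = D.opF α hα ∘ₗ D.chevalley from LinearMap.congr_fun h u
  refine D.linearMap_ext (fun μ hμ => ?_) (fun β hβ => ?_)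
  · have hneg : D.B (-μ) α = -D.B μ α := by rw [map_neg, LinearMap.neg_apply]
    simp only [LinearMap.comp_apply, chevalley_xv]
    by_cases h : D.B μ α = -1
    · rw [D.opE_xv_of_pair_eq_neg_one hα hμ h, chevalley_xv,
        D.opF_xv_of_pair_eq_one hα _ (by rw [hneg, h, neg_neg])]
      exact D.xv_congr (neg_add' μ α) _ _
    · rw [D.opE_xv_of_pair_ne_neg_one hα hμ h,
        D.opF_xv_of_pair_ne_one hα _ (by rwa [hneg, Ne, neg_eq_iff_eq_neg])]
      split_ifs with h1 h2 h2
      · exact D.chevalley_hv hα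
      · exact absurd (neg_eq_iff_eq_neg.mpr h1) h2
      · exact absurd (neg_eq_iff_eq_neg.mp h2) h1
      · exact map_zero _
  · simp only [LinearMap.comp_apply, chevalley_hv, opE_hv, opF_hv, map_smul, chevalley_xv]

theorem chevalley_opKinv (u : D.R) :
    D.chevalley (D.opKinv α hα u) = D.opK α hα (D.chevalley u) := by
  suffices h : D.chevalley ∘ₗ D.opKinv α hα = D.opK α hα ∘ₗ D.chevalley from
    LinearMap.congr_fun h u
  refine D.linearMap_ext (fun μ hμ => ?_) (fun β hβ => ?_)
  · simp only [LinearMap.comp_apply, opKinv_xv, map_smul, chevalley_xv, opK_xv, map_neg,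
      Rat.num_neg_eq_neg_num]
  · simp only [LinearMap.comp_apply, opKinv_hv, chevalley_hv, opK_hv]

theorem form_opF_left (u v : D.R) :
    D.form (D.opF α hα u) v = D.form u (qv • D.opE α hα (D.opK α hα v)) := by
  have hF : ∀ w, D.opF α hα w = D.chevalley (D.opE α hα (D.chevalley w)) := fun w => by
    rw [chevalley_opE, chevalley_chevalley]
  have hKinv : ∀ w, D.opKinv α hα (D.chevalley w) = D.chevalley (D.opK α hα w) := fun w => by
    rw [← D.chevalley_chevalley (D.opKinv α hα _), chevalley_opKinv, chevalley_chevalley]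
  calc D.form (D.opF α hα u) v
      = D.form (D.opE α hα (D.chevalley u)) (D.chevalley v) := by
        rw [hF, form_chevalley_left]
    _ = D.form (D.chevalley u) (qv • D.opF α hα (D.opKinv α hα (D.chevalley v))) :=
        D.form_opE_left hα _ _
    _ = D.form u (qv • D.opE α hα (D.opK α hα v)) := by
        rw [form_chevalley_left, map_smul, hKinv, hF, chevalley_chevalley, chevalley_chevalley]

end SimplyLacedDatum

/-- the semilinear form `⟨·,·⟩` on `R` is `τ`-invariant: for all
`u, v ∈ R` and simple roots `α`, `⟨E_α u, v⟩ = ⟨u, q F_α K_α⁻¹ v⟩`,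
`⟨F_α u, v⟩ = ⟨u, q E_α K_α v⟩`, and `⟨K_α u, v⟩ = ⟨u, K_α⁻¹ v⟩`. -/
theorem SimplyLacedDatum.form_tau_invariant {E : Type} [AddCommGroup E] [Module ℚ E]
    (D : SimplyLacedDatum E) (α : E) (hα : α ∈ D.Base) (u v : D.R) :
    D.form (D.opE α hα u) v = D.form u (qv • D.opF α hα (D.opKinv α hα v)) ∧
    D.form (D.opF α hα u) v = D.form u (qv • D.opE α hα (D.opK α hα v)) ∧
    D.form (D.opK α hα u) v = D.form u (D.opKinv α hα v) :=
  ⟨D.form_opE_left hα u v, D.form_opF_left hα u v, D.form_opK_left hα u v⟩
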